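/- arXiv:1110.1961 — 2 statements merged into one kernel-verified Lean document; each statement's English description precedes it below -/
import Mathlib

section
/- Let A be a finite subset of an abelian group G with |A| ≥ 5 and |2∧A| < |A|. Then |A| is even and there is a subset B ⊆ A with |B| = |A|/2 + 1 such that |2∧B| = |A| − 1. -/
open Finset Pointwise

/-- The set of sums of two distinct elements of `A`. -/
def twoSum {G : Type*} [AddCommGroup G] [DecidableEq G] (A : Finset G) : Finset G :=
  ((A ×ˢ A).filter fun p => p.1 ≠ p.2).image fun p => p.1 + p.2

lemma mem_twoSum {G : Type*} [AddCommGroup G] [DecidableEq G] {A : Finset G} {x : G} :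
    x ∈ twoSum A ↔ ∃ a ∈ A, ∃ b ∈ A, a ≠ b ∧ a + b = x := by
  simp only [twoSum, Finset.mem_image, Finset.mem_filter, Finset.mem_product, Prod.exists]
  constructor
  · rintro ⟨a, b, ⟨⟨ha, hb⟩, hne⟩, rfl⟩
    exact ⟨a, ha, b, hb, hne, rfl⟩
  · rintro ⟨a, ha, b, hb, hne, rfl⟩
    exact ⟨a, b, ⟨⟨ha, hb⟩, hne⟩, rfl⟩

lemma twoSum_mono {G : Type*} [AddCommGroup G] [DecidableEq G] {A B : Finset G}
    (h : A ⊆ B) : twoSum A ⊆ twoSum B := by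
  intro x hx
  rw [mem_twoSum] at hx ⊢
  obtain ⟨a, ha, b, hb, hne, rfl⟩ := hx
  exact ⟨a, h ha, b, h hb, hne, rfl⟩

lemma twoSum_image_add {G : Type*} [AddCommGroup G] [DecidableEq G] (A : Finset G) (g : G) :
    twoSum (A.image (· + g)) = (twoSum A).image (· + (g + g)) := by
  ext x
  simp only [mem_twoSum, Finset.mem_image]
  constructor
  · rintro ⟨a, ⟨a', ha', rfl⟩, b, ⟨b', hb', rfl⟩, hne, rfl⟩
    refine ⟨a' + b', ⟨a', ha', b', hb', ?_, rfl⟩, by abel⟩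
    intro h; apply hne; rw [h]
  · rintro ⟨y, ⟨a, ha, b, hb, hne, rfl⟩, rfl⟩
    exact ⟨a + g, ⟨a, ha, rfl⟩, b + g, ⟨b, hb, rfl⟩, by simpa, by abel⟩

lemma stmt10_core {G : Type*} [AddCommGroup G] [DecidableEq G] (A : Finset G)
    (hA : 5 ≤ A.card) (h : (twoSum A).card < A.card) (h0 : (0 : G) ∈ A) :
    Even A.card ∧
      ∃ B ⊆ A, B.card = A.card / 2 + 1 ∧ (twoSum B).card = A.card - 1 := by
  have hsub : A.erase 0 ⊆ twoSum A := by
    intro a ha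
    rw [Finset.mem_erase] at ha
    exact mem_twoSum.2 ⟨a, ha.2, 0, h0, ha.1, by simp⟩
  have hcard_erase : (A.erase 0).card = A.card - 1 := Finset.card_erase_of_mem h0
  have heq : twoSum A = A.erase 0 := by
    refine (Finset.eq_of_subset_of_card_le hsub ?_).symm
    rw [hcard_erase]; omega
  have hclosed : ∀ a ∈ A, ∀ b ∈ A, a ≠ b → a + b ∈ A ∧ a + b ≠ 0 := by
    intro a ha b hb hne
    have : a + b ∈ twoSum A := mem_twoSum.2 ⟨a, ha, b, hb, hne, rfl⟩
    rw [heq, Finset.mem_erase] at this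
    exact ⟨this.2, this.1⟩
  -- image lemma: for a ∈ A nonzero, (a + ·) maps A.erase a onto A.erase 0
  have himg : ∀ a ∈ A, a ≠ 0 → (A.erase a).image (a + ·) = A.erase 0 := by
    intro a ha ha0
    apply Finset.eq_of_subset_of_card_le
    · intro x hx
      rw [Finset.mem_image] at hx
      obtain ⟨b, hb, rfl⟩ := hx
      rw [Finset.mem_erase] at hb
      obtain ⟨hab, hbA⟩ := hb
      have := hclosed a ha b hbA (fun e => hab e.symm)
      exact Finset.mem_erase.2 ⟨this.2, this.1⟩
    · rw [Finset.card_image_of_injective _ (add_right_injective a),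
        Finset.card_erase_of_mem ha, hcard_erase]
  have hdiff : ∀ a ∈ A, a ≠ 0 → ∀ x ∈ A, x ≠ 0 → x - a ∈ A := by
    intro a ha ha0 x hx hx0
    have hxm : x ∈ (A.erase a).image (a + ·) := by
      rw [himg a ha ha0]; exact Finset.mem_erase.2 ⟨hx0, hx⟩
    rw [Finset.mem_image] at hxm
    obtain ⟨b, hb, rfl⟩ := hxm
    have : a + b - a = b := by abel
    rw [this]
    exact Finset.mem_of_mem_erase hb
  -- every element of A has order dividing 2
  have h2 : ∀ a ∈ A, a + a = 0 := by
    intro a ha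
    by_contra h2a
    have ha0 : a ≠ 0 := by rintro rfl; simp at h2a
    -- pick b ∈ A \ {0, a, -a}
    have hbex : (A \ {0, a, -a}).Nonempty := by
      rw [← Finset.card_pos]
      have h3 : ({0, a, -a} : Finset G).card ≤ 3 := by
        refine le_trans (Finset.card_insert_le _ _) (Nat.succ_le_succ ?_)
        exact le_trans (Finset.card_insert_le _ _) (by simp)
      have h4 : A.card - ({0, a, -a} : Finset G).card ≤ (A \ {0, a, -a}).card :=
        Finset.le_card_sdiff _ _
      omega
    obtain ⟨b, hb⟩ := hbex
    rw [Finset.mem_sdiff, Finset.mem_insert, Finset.mem_insert, Finset.mem_singleton] at hb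
    push_neg at hb
    obtain ⟨hbA, hb0, hba, hbna⟩ := hb
    have hc := hclosed a ha b hbA (fun e => hba e.symm)
    have hna : -a ∈ A := by
      have := hdiff (a + b) hc.1 hc.2 b hbA hb0
      have e : b - (a + b) = -a := by abel
      rwa [e] at this
    have hnaa : -a ≠ a := by
      intro e
      have h5 : a + -a = a + a := congrArg (a + ·) e
      rw [add_neg_cancel] at h5
      exact h2a h5.symm
    have : (0 : G) ∈ twoSum A :=
      mem_twoSum.2 ⟨a, ha, -a, hna, fun e => hnaa e.symm, by abel⟩
    rw [heq] at this
    exact (Finset.mem_erase.1 this).1 rfl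
  -- Evenness via involution x ↦ x + a₀
  obtain ⟨a₀, ha₀⟩ : (A.erase 0).Nonempty := by
    rw [← Finset.card_pos, hcard_erase]; omega
  rw [Finset.mem_erase] at ha₀
  obtain ⟨ha₀0, ha₀A⟩ := ha₀
  have hgmem : ∀ a ∈ A, a + a₀ ∈ A := by
    intro a ha
    rcases eq_or_ne a a₀ with rfl | hne
    · rw [h2 a ha]; exact h0
    · exact (hclosed a ha a₀ ha₀A hne).1
  have heven : Even A.card := by
    have hprod : ∏ _x ∈ A, (-1 : ℤ) = 1 := by
      apply Finset.prod_involution (fun a _ => a + a₀)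
      · intro a _; norm_num
      · intro a _ _ e
        exact ha₀0 (by simpa using e)
      · exact hgmem
      · intro a ha
        have : a + a₀ + a₀ = a + (a₀ + a₀) := by abel
        rw [this, h2 a₀ ha₀A, add_zero]
    rw [Finset.prod_const] at hprod
    exact (neg_one_pow_eq_one_iff_even (by norm_num : (-1 : ℤ) ≠ 1)).1 hprod
  refine ⟨heven, ?_⟩
  obtain ⟨k, hk⟩ := heven
  obtain ⟨B, hBA, hBcard⟩ := Finset.exists_subset_card_eq
    (show A.card / 2 + 1 ≤ A.card by omega)
  refine ⟨B, hBA, hBcard, ?_⟩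
  have hBsub : twoSum B ⊆ A.erase 0 := heq ▸ twoSum_mono hBA
  have hBsup : A.erase 0 ⊆ twoSum B := by
    intro x hx
    rw [Finset.mem_erase] at hx
    obtain ⟨hx0, hxA⟩ := hx
    set T := B.image (· + x) with hT
    have hTA : T ⊆ A := by
      intro y hy
      rw [hT, Finset.mem_image] at hy
      obtain ⟨b, hb, rfl⟩ := hy
      rcases eq_or_ne b x with rfl | hne
      · rw [h2 b (hBA hb)]; exact h0
      · exact (hclosed b (hBA hb) x hxA hne).1
    have hTcard : T.card = B.card := Finset.card_image_of_injective _ (add_left_injective x)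
    have hint : (B ∩ T).Nonempty := by
      apply Finset.inter_nonempty_of_card_lt_card_add_card hBA hTA
      rw [hTcard, hBcard]; omega
    obtain ⟨y, hy⟩ := hint
    rw [Finset.mem_inter, hT, Finset.mem_image] at hy
    obtain ⟨hyB, b, hbB, rfl⟩ := hy
    have hne : b + x ≠ b := by
      intro e
      exact hx0 (by simpa using e)
    refine mem_twoSum.2 ⟨b + x, hyB, b, hbB, hne, ?_⟩
    have : b + x + b = x + (b + b) := by abel
    rw [this, h2 b (hBA hbB), add_zero]
  have : twoSum B = A.erase 0 := Finset.Subset.antisymm hBsub hBsup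
  rw [this, hcard_erase]

theorem stmt10 {G : Type*} [AddCommGroup G] [DecidableEq G] (A : Finset G)
    (hA : 5 ≤ A.card) (h : (twoSum A).card < A.card) :
    Even A.card ∧
      ∃ B ⊆ A, B.card = A.card / 2 + 1 ∧ (twoSum B).card = A.card - 1 := by
  obtain ⟨a₀, ha₀⟩ : A.Nonempty := Finset.card_pos.1 (by omega)
  set A' := A.image (· + (-a₀)) with hA'
  have hcard' : A'.card = A.card := Finset.card_image_of_injective _ (add_left_injective _)
  have h0' : (0 : G) ∈ A' := by
    rw [hA', Finset.mem_image]
    exact ⟨a₀, ha₀, by simp⟩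
  have htw' : (twoSum A').card = (twoSum A).card := by
    rw [hA', twoSum_image_add, Finset.card_image_of_injective _ (add_left_injective _)]
  obtain ⟨heven, B', hB'A', hB'card, hB'tw⟩ :=
    stmt10_core A' (by omega) (by omega) h0'
  rw [hcard'] at heven
  refine ⟨heven, B'.image (· + a₀), ?_, ?_, ?_⟩
  · intro x hx
    rw [Finset.mem_image] at hx
    obtain ⟨b, hb, rfl⟩ := hx
    have := hB'A' hb
    rw [hA', Finset.mem_image] at this
    obtain ⟨a, ha, rfl⟩ := this
    simpa using ha
  · rw [Finset.card_image_of_injective _ (add_left_injective _), hB'card, hcard']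
  · rw [twoSum_image_add, Finset.card_image_of_injective _ (add_left_injective _), hB'tw, hcard']
end

section
/- Let A be a finite subset of an abelian group G of even cardinality |A| ≥ 6. Suppose A contains a coset of some subgroup of order |A|/2, but A is not itself a coset of a subgroup of G. Then |k∧A| > |A| for all k with 3 ≤ k ≤ |A| − 3. -/
set_option linter.unusedSectionVars false
set_option maxHeartbeats 1000000

open Finset Pointwise

/-- The set of sums of `k` distinct elements of `A`. -/
def nSum {G : Type*} [AddCommGroup G] [DecidableEq G] (k : ℕ) (A : Finset G) : Finset G :=
  (A.powersetCard k).image fun B => B.sum id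

section Aux

variable {G : Type*} [AddCommGroup G] [DecidableEq G]

lemma mem_nSum {k : ℕ} {A : Finset G} {x : G} :
    x ∈ nSum k A ↔ ∃ B : Finset G, B ⊆ A ∧ B.card = k ∧ B.sum id = x := by
  simp only [nSum, mem_image, mem_powersetCard]
  tauto

lemma nSum_nonempty {k : ℕ} {A : Finset G} (h : k ≤ A.card) : (nSum k A).Nonempty := by
  obtain ⟨B, hB, hBc⟩ := Finset.exists_subset_card_eq h
  exact ⟨B.sum id, mem_nSum.2 ⟨B, hB, hBc, rfl⟩⟩

lemma sum_mem_nSum {A C B : Finset G} (hC : C ⊆ A) (hB : B ⊆ A) (hd : Disjoint C B)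
    {k : ℕ} (hk : C.card + B.card = k) : C.sum id + B.sum id ∈ nSum k A := by
  refine mem_nSum.2 ⟨C ∪ B, Finset.union_subset hC hB, ?_, ?_⟩
  · rw [Finset.card_union_of_disjoint hd]; exact hk
  · rw [Finset.sum_union hd]

section Subgroup
variable {H : AddSubgroup G} {HF : Finset G} (hHF : ∀ x, x ∈ HF ↔ x ∈ H)

include hHF

lemma nSum_subset_sub {j : ℕ} : nSum j HF ⊆ HF := by
  intro x hx
  obtain ⟨B, hB, -, rfl⟩ := mem_nSum.1 hx
  rw [hHF]
  exact AddSubgroup.sum_mem H (fun b hb => (hHF b).1 (hB hb))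

lemma shift_mem_nSum {j : ℕ} {g x : G} (hg : g ∈ H) (hgn : j • g ≠ 0)
    (hx : x ∈ nSum j HF) : x + g ∈ nSum j HF := by
  obtain ⟨B, hB, hBc, rfl⟩ := mem_nSum.1 hx
  -- find b ∈ B with b + g ∉ B
  have hex : ∃ b ∈ B, b + g ∉ B := by
    by_contra hcon
    push_neg at hcon
    have himg : B.image (· + g) = B := by
      apply Finset.eq_of_subset_of_card_le
      · intro y hy
        obtain ⟨b, hb, rfl⟩ := Finset.mem_image.1 hy
        exact hcon b hb
      · rw [Finset.card_image_of_injective _ (add_left_injective g)]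
    have hsum : B.sum id + B.card • g = B.sum id := by
      conv_rhs => rw [← himg]
      rw [Finset.sum_image (fun x _ y _ h => by simpa using h)]
      simp [Finset.sum_add_distrib]
    apply hgn
    rw [← hBc]
    exact (add_eq_left).1 hsum
  obtain ⟨b, hb, hbg⟩ := hex
  refine mem_nSum.2 ⟨insert (b + g) (B.erase b), ?_, ?_, ?_⟩
  · intro y hy
    rcases Finset.mem_insert.1 hy with rfl | hy
    · rw [hHF]; exact H.add_mem ((hHF b).1 (hB hb)) hg
    · exact hB (Finset.mem_of_mem_erase hy)
  · rw [Finset.card_insert_of_notMem (fun h => hbg (Finset.mem_of_mem_erase h)),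
      Finset.card_erase_of_mem hb, hBc]
    have : 0 < j := hBc ▸ Finset.card_pos.2 ⟨b, hb⟩
    omega
  · rw [Finset.sum_insert (fun h => hbg (Finset.mem_of_mem_erase h)),
      Finset.sum_erase_eq_sub hb]
    simp only [id]
    abel

lemma shift_neg_mem_nSum {j : ℕ} {g : G}
    (hg : ∀ x ∈ nSum j HF, x + g ∈ nSum j HF) :
    ∀ x ∈ nSum j HF, x - g ∈ nSum j HF := by
  intro x hx
  have himg : (nSum j HF).image (· + g) = nSum j HF := by
    apply Finset.eq_of_subset_of_card_le
    · intro y hy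
      obtain ⟨b, hb, rfl⟩ := Finset.mem_image.1 hy
      exact hg b hb
    · rw [Finset.card_image_of_injective _ (add_left_injective g)]
  rw [← himg] at hx
  obtain ⟨y, hy, hyx⟩ := Finset.mem_image.1 hx
  rwa [← hyx, add_sub_cancel_right]

lemma nSum_full {j : ℕ} (hj : j ≤ HF.card) (hgood : ∃ g ∈ H, j • g ≠ 0) :
    nSum j HF = HF := by
  obtain ⟨g0, hg0, hg0n⟩ := hgood
  -- every h ∈ H shifts nSum j HF into itself
  have key : ∀ h ∈ H, ∀ x ∈ nSum j HF, x + h ∈ nSum j HF := by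
    intro h hh x hx
    by_cases hc : j • h = 0
    · have h1 : x + (h + g0) ∈ nSum j HF := by
        apply shift_mem_nSum hHF (H.add_mem hh hg0)
        rw [smul_add, hc, zero_add]
        exact hg0n
        exact hx
      have h2 := shift_neg_mem_nSum hHF
        (fun y hy => shift_mem_nSum hHF hg0 hg0n hy) _ h1
      have : x + (h + g0) - g0 = x + h := by abel
      rwa [this] at h2
    · exact shift_mem_nSum hHF hh hc hx
  apply Finset.Subset.antisymm (nSum_subset_sub hHF)
  obtain ⟨x0, hx0⟩ := nSum_nonempty (A := HF) hj
  intro y hy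
  have hx0H : x0 ∈ H := (hHF x0).1 (nSum_subset_sub hHF hx0)
  have hyH : y ∈ H := (hHF y).1 hy
  have := key (y - x0) (H.sub_mem hyH hx0H) x0 hx0
  rwa [add_sub_cancel] at this

end Subgroup

lemma nSum_image_add (k : ℕ) (A : Finset G) (t : G) :
    nSum k (A.image (t + ·)) = (nSum k A).image (k • t + ·) := by
  ext x
  simp only [mem_nSum, Finset.mem_image]
  constructor
  · rintro ⟨B, hB, hBc, rfl⟩
    refine ⟨(B.image (fun b => -t + b)).sum id, ⟨B.image (fun b => -t + b), ?_, ?_, rfl⟩, ?_⟩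
    · intro c hc
      obtain ⟨b, hb, rfl⟩ := Finset.mem_image.1 hc
      obtain ⟨a, ha, rfl⟩ := Finset.mem_image.1 (hB hb)
      simpa using ha
    · rw [Finset.card_image_of_injective _ (add_right_injective (-t)), hBc]
    · have hs : (B.image (fun b => -t + b)).sum id = B.card • (-t) + B.sum id := by
        rw [Finset.sum_image (fun x _ y _ h => by simpa using h)]
        simp only [id]
        rw [Finset.sum_add_distrib, Finset.sum_const]
      rw [hs, hBc, smul_neg]
      abel
  · rintro ⟨y, ⟨B, hB, hBc, rfl⟩, rfl⟩
    refine ⟨B.image (t + ·), Finset.image_subset_image hB, ?_, ?_⟩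
    · rw [Finset.card_image_of_injective _ (add_right_injective t), hBc]
    · rw [Finset.sum_image (fun x _ y _ h => by simpa using h)]
      simp only [id]
      rw [Finset.sum_add_distrib, Finset.sum_const, hBc]

lemma card_nSum_image_add (k : ℕ) (A : Finset G) (t : G) :
    (nSum k (A.image (t + ·))).card = (nSum k A).card := by
  rw [nSum_image_add, Finset.card_image_of_injective _ (add_right_injective (k • t))]

lemma nSum_compl (k : ℕ) (A : Finset G) (hk : k ≤ A.card) :
    nSum (A.card - k) A = (nSum k A).image (A.sum id - ·) := by
  ext x
  simp only [mem_nSum, Finset.mem_image]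
  constructor
  · rintro ⟨B, hB, hBc, rfl⟩
    refine ⟨(A \ B).sum id, ⟨A \ B, Finset.sdiff_subset, ?_, rfl⟩, ?_⟩
    · rw [Finset.card_sdiff_of_subset hB, hBc]; omega
    · rw [Finset.sum_sdiff_eq_sub hB]; abel
  · rintro ⟨y, ⟨B, hB, hBc, rfl⟩, rfl⟩
    refine ⟨A \ B, Finset.sdiff_subset, ?_, ?_⟩
    · rw [Finset.card_sdiff_of_subset hB, hBc]
    · rw [Finset.sum_sdiff_eq_sub hB]

lemma card_nSum_compl (k : ℕ) (A : Finset G) (hk : k ≤ A.card) :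
    (nSum (A.card - k) A).card = (nSum k A).card := by
  rw [nSum_compl k A hk, Finset.card_image_of_injective _ (fun a b h => by
    simpa using sub_right_injective h)]

-- counting lemma
lemma card_lower {H : AddSubgroup G} {HF : Finset G} (hHF : ∀ x, x ∈ HF ↔ x ∈ H)
    (N : Finset G) (x1 x2 z : G)
    (h1 : HF.image (x1 + ·) ⊆ N) (h2 : HF.image (x2 + ·) ⊆ N) (hz : z ∈ N)
    (h12 : ¬ x1 - x2 ∈ H) (hz1 : ¬ z - x1 ∈ H) (hz2 : ¬ z - x2 ∈ H) :
    2 * HF.card + 1 ≤ N.card := by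
  have hd : Disjoint (HF.image (x1 + ·)) (HF.image (x2 + ·)) := by
    rw [Finset.disjoint_left]
    rintro y hy1 hy2
    obtain ⟨a, ha, rfl⟩ := Finset.mem_image.1 hy1
    obtain ⟨b, hb, hba⟩ := Finset.mem_image.1 hy2
    apply h12
    have hq : b - a = x1 - x2 := by
      rw [sub_eq_sub_iff_add_eq_add, add_comm b x2]
      exact hba
    rw [← hq]
    exact H.sub_mem ((hHF b).1 hb) ((hHF a).1 ha)
  have hzu : z ∉ HF.image (x1 + ·) ∪ HF.image (x2 + ·) := by
    intro hzu
    rcases Finset.mem_union.1 hzu with h | h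
    · obtain ⟨a, ha, rfl⟩ := Finset.mem_image.1 h
      exact hz1 (by simpa using (hHF a).1 ha)
    · obtain ⟨a, ha, rfl⟩ := Finset.mem_image.1 h
      exact hz2 (by simpa using (hHF a).1 ha)
  have hsub : insert z (HF.image (x1 + ·) ∪ HF.image (x2 + ·)) ⊆ N := by
    intro y hy
    rcases Finset.mem_insert.1 hy with rfl | hy
    · exact hz
    · rcases Finset.mem_union.1 hy with h | h
      · exact h1 h
      · exact h2 h
  calc 2 * HF.card + 1 = (insert z (HF.image (x1 + ·) ∪ HF.image (x2 + ·))).card := by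
        rw [Finset.card_insert_of_notMem hzu, Finset.card_union_of_disjoint hd,
          Finset.card_image_of_injective _ (add_right_injective x1),
          Finset.card_image_of_injective _ (add_right_injective x2)]
        ring
    _ ≤ N.card := Finset.card_le_card hsub

lemma main_lemma {H : AddSubgroup G} {HF : Finset G} (hHF : ∀ x, x ∈ HF ↔ x ∈ H)
    {A : Finset G} (hHA : HF ⊆ A) (hcard : A.card = 2 * HF.card) (hm : 3 ≤ HF.card)
    (hnc : ¬ ∃ (K : AddSubgroup G) (g : G), (A : Set G) = g +ᵥ (K : Set G))
    (k : ℕ) (hk3 : 3 ≤ k) (hkm : k ≤ HF.card) : A.card < (nSum k A).card := by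
  set m := HF.card with hmdef
  set R := A \ HF with hRdef
  have hRcard : R.card = m := by
    rw [hRdef, Finset.card_sdiff_of_subset hHA, hcard]; omega
  have hRH : ∀ r ∈ R, r ∉ H := fun r hr hrH =>
    (Finset.mem_sdiff.1 hr).2 ((hHF r).2 hrH)
  have hRA : R ⊆ A := Finset.sdiff_subset
  -- basic membership producers
  have key : ∀ (j : ℕ) (C : Finset G), C ⊆ R → C.card + j = k →
      ∀ w ∈ nSum j HF, C.sum id + w ∈ nSum k A := by
    intro j C hCR hCk w hw
    obtain ⟨B, hBH, hBc, rfl⟩ := mem_nSum.1 hw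
    exact sum_mem_nSum (hCR.trans hRA) (hBH.trans hHA)
      (Finset.disjoint_of_subset_left hCR
        (Finset.disjoint_of_subset_right hBH Finset.sdiff_disjoint))
      (by rw [hBc]; exact hCk)
  have full : ∀ (j : ℕ) (C : Finset G), C ⊆ R → C.card + j = k →
      (∃ g ∈ H, j • g ≠ 0) → HF.image (C.sum id + ·) ⊆ nSum k A := by
    intro j C hCR hCk hg y hy
    obtain ⟨a, ha, rfl⟩ := Finset.mem_image.1 hy
    have hjk : j ≤ k := by omega
    have hj : j ≤ HF.card := by rw [← hmdef]; exact hjk.trans hkm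
    exact key j C hCR hCk a (by rw [nSum_full hHF hj hg]; exact ha)
  have elt : ∀ (j : ℕ) (C : Finset G), C ⊆ R → C.card + j = k → j ≤ HF.card →
      ∃ w, w ∈ H ∧ C.sum id + w ∈ nSum k A := by
    intro j C hCR hCk hj
    obtain ⟨w, hw⟩ := nSum_nonempty (A := HF) hj
    exact ⟨w, (hHF w).1 (nSum_subset_sub hHF hw), key j C hCR hCk w hw⟩
  -- good exponents
  have good1 : ∃ g ∈ H, 1 • g ≠ 0 := by
    obtain ⟨b, hb, hbne⟩ := Finset.exists_mem_ne (s := HF) (by omega) (0 : G)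
    exact ⟨b, (hHF b).1 hb, by simpa using hbne⟩
  have good_succ : ∀ j : ℕ, (∀ g ∈ H, j • g = 0) → ∃ g ∈ H, (j + 1) • g ≠ 0 := by
    intro j hbad
    obtain ⟨b, hbH, hbne⟩ := good1
    refine ⟨b, hbH, ?_⟩
    rw [succ_nsmul, hbad b hbH, zero_add]
    simpa using hbne
  -- the main goal reduces to finding two cosets and a point
  rw [hcard]
  have hgoal : ∀ x1 x2 z : G, HF.image (x1 + ·) ⊆ nSum k A → HF.image (x2 + ·) ⊆ nSum k A →
      z ∈ nSum k A → ¬ x1 - x2 ∈ H → ¬ z - x1 ∈ H → ¬ z - x2 ∈ H →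
      2 * m < (nSum k A).card := by
    intro x1 x2 z h1 h2 hz h12 hz1 hz2
    have := card_lower hHF (nSum k A) x1 x2 z h1 h2 hz h12 hz1 hz2
    omega
  by_cases hcase : ∀ r1 ∈ R, ∀ r2 ∈ R, r1 - r2 ∈ H
  · -- Case I : R is contained in a single coset r0 + H
    obtain ⟨r0, hr0R⟩ := Finset.card_pos.1 (by omega : 0 < R.card)
    have hr0 : r0 ∉ H := hRH r0 hr0R
    -- r0 + r0 ∉ H, else A is a coset
    have h2r0 : r0 + r0 ∉ H := by
      intro h2
      apply hnc
      refine ⟨{  carrier := (H : Set G) ∪ (fun h => r0 + h) '' (H : Set G)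
                 add_mem' := ?_
                 zero_mem' := Or.inl H.zero_mem
                 neg_mem' := ?_ }, 0, ?_⟩
      · rintro a b (ha | ⟨h, hh, rfl⟩) (hb | ⟨h', hh', rfl⟩)
        · exact Or.inl (H.add_mem ha hb)
        · exact Or.inr ⟨h' + a, H.add_mem hh' ha, show r0 + (h' + a) = a + (r0 + h') by abel⟩
        · exact Or.inr ⟨h + b, H.add_mem hh hb, show r0 + (h + b) = (r0 + h) + b by abel⟩
        · refine Or.inl ?_
          have heq : (r0 + h) + (r0 + h') = (r0 + r0) + (h + h') := by abel
          rw [heq]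
          exact H.add_mem h2 (H.add_mem hh hh')
      · rintro a (ha | ⟨h, hh, rfl⟩)
        · exact Or.inl (H.neg_mem ha)
        · exact Or.inr ⟨-(r0 + r0) - h, H.sub_mem (H.neg_mem h2) hh,
            show r0 + (-(r0 + r0) - h) = -(r0 + h) by abel⟩
      · rw [zero_vadd]
        have hRimg : R = HF.image (fun h => r0 + h) := by
          apply Finset.eq_of_subset_of_card_le
          · intro y hy
            refine Finset.mem_image.2 ⟨y - r0, (hHF _).2 (hcase y hy r0 hr0R), by abel⟩
          · rw [Finset.card_image_of_injective _ (add_right_injective r0), hRcard]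
        ext x
        simp only [Finset.coe_sort_coe, Finset.mem_coe]
        constructor
        · intro hx
          by_cases hxH : x ∈ HF
          · exact Or.inl ((hHF x).1 hxH)
          · have hxR : x ∈ R := Finset.mem_sdiff.2 ⟨hx, hxH⟩
            exact Or.inr ⟨x - r0, hcase x hxR r0 hr0R,
              show r0 + (x - r0) = x by abel⟩
        · rintro (hx | ⟨h, hh, rfl⟩)
          · exact hHA ((hHF x).2 hx)
          · have : r0 + h ∈ R := by
              rw [hRimg]
              exact Finset.mem_image.2 ⟨h, (hHF h).2 hh, rfl⟩
            exact hRA this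
    -- class difference lemma
    have hcls : ∀ (C : Finset G), C ⊆ R → C.sum id - C.card • r0 ∈ H := by
      intro C hCR
      have heq : C.sum id - C.card • r0 = ∑ r ∈ C, (r - r0) := by
        rw [Finset.sum_sub_distrib, Finset.sum_const]
        simp [id]
      rw [heq]
      exact H.sum_mem (fun r hr => hcase r (hCR hr) r0 hr0R)
    have hdiff : ∀ (C1 C2 : Finset G), C1 ⊆ R → C2 ⊆ R → ∀ d : ℕ,
        C1.card = C2.card + d → d • r0 ∉ H → ∀ w1 ∈ H, ∀ w2 ∈ H,
        (C1.sum id + w1) - (C2.sum id + w2) ∉ H := by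
      intro C1 C2 hC1 hC2 d hd hdr0 w1 hw1 w2 hw2 hmem
      apply hdr0
      have u1 := hcls C1 hC1
      have u2 := hcls C2 hC2
      rw [hd, add_nsmul] at u1
      have heq : d • r0 = ((C1.sum id + w1) - (C2.sum id + w2))
          - (C1.sum id - (C2.card • r0 + d • r0)) + (C2.sum id - C2.card • r0)
          - w1 + w2 := by abel
      rw [heq]
      exact H.add_mem (H.sub_mem (H.add_mem (H.sub_mem hmem u1) u2) hw1) hw2
    have hd1 : (1 : ℕ) • r0 ∉ H := by rwa [one_nsmul]
    have hd2 : (2 : ℕ) • r0 ∉ H := by rwa [two_nsmul]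
    -- choose subsets of R of the right sizes
    obtain ⟨C1, hC1R, hC1c⟩ := Finset.exists_subset_card_eq
      (show k - 1 ≤ R.card by omega)
    obtain ⟨C2, hC2R, hC2c⟩ := Finset.exists_subset_card_eq
      (show k - 2 ≤ R.card by omega)
    obtain ⟨C3, hC3R, hC3c⟩ := Finset.exists_subset_card_eq
      (show k - 3 ≤ R.card by omega)
    by_cases hg2 : ∃ g ∈ H, 2 • g ≠ 0
    · -- use j = 1, 2 for full cosets, j = 3 for the extra point
      obtain ⟨w, hwH, hwN⟩ := elt 3 C3 hC3R (by omega) (by omega)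
      refine hgoal (C1.sum id) (C2.sum id) (C3.sum id + w)
        (full 1 C1 hC1R (by omega) good1)
        (full 2 C2 hC2R (by omega) hg2)
        hwN ?_ ?_ ?_
      · intro hmem
        exact hdiff C1 C2 hC1R hC2R 1 (by omega) hd1 0 H.zero_mem 0 H.zero_mem
          (by rw [add_zero, add_zero]; exact hmem)
      · intro hmem
        refine hdiff C1 C3 hC1R hC3R 2 (by omega) hd2 0 H.zero_mem w hwH ?_
        rw [add_zero, ← neg_sub]
        exact H.neg_mem hmem
      · intro hmem
        refine hdiff C2 C3 hC2R hC3R 1 (by omega) hd1 0 H.zero_mem w hwH ?_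
        rw [add_zero, ← neg_sub]
        exact H.neg_mem hmem
    · -- exponent 2 case: use j = 1, 3 for full cosets, j = 2 for the extra point
      push_neg at hg2
      have good3 : ∃ g ∈ H, 3 • g ≠ 0 := by
        have := good_succ 2 hg2
        simpa using this
      obtain ⟨w, hwH, hwN⟩ := elt 2 C2 hC2R (by omega) (by omega)
      refine hgoal (C1.sum id) (C3.sum id) (C2.sum id + w)
        (full 1 C1 hC1R (by omega) good1)
        (full 3 C3 hC3R (by omega) good3)
        hwN ?_ ?_ ?_
      · intro hmem
        exact hdiff C1 C3 hC1R hC3R 2 (by omega) hd2 0 H.zero_mem 0 H.zero_mem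
          (by rw [add_zero, add_zero]; exact hmem)
      · intro hmem
        refine hdiff C1 C2 hC1R hC2R 1 (by omega) hd1 0 H.zero_mem w hwH ?_
        rw [add_zero, ← neg_sub]
        exact H.neg_mem hmem
      · intro hmem
        exact hdiff C2 C3 hC2R hC3R 1 (by omega) hd1 w hwH 0 H.zero_mem
          (by rw [add_zero]; exact hmem)
  · -- Case II : R meets two cosets
    push_neg at hcase
    obtain ⟨r1, hr1R, r2, hr2R, hr12⟩ := hcase
    have hr1H : r1 ∉ H := hRH r1 hr1R
    have hr2H : r2 ∉ H := hRH r2 hr2R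
    have hrne : r1 ≠ r2 := by
      rintro rfl
      exact hr12 (by simpa using H.zero_mem)
    obtain ⟨r3, hr3⟩ : (R \ {r1, r2}).Nonempty := by
      rw [← Finset.card_pos]
      have h1 := Finset.le_card_sdiff ({r1, r2} : Finset G) R
      have h2 : ({r1, r2} : Finset G).card ≤ 2 := Finset.card_le_two
      omega
    have hr3R : r3 ∈ R := (Finset.mem_sdiff.1 hr3).1
    have hr3n : r3 ≠ r1 ∧ r3 ≠ r2 := by
      have := (Finset.mem_sdiff.1 hr3).2
      simp only [Finset.mem_insert, Finset.mem_singleton] at this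
      tauto
    have hr3H : r3 ∉ H := hRH r3 hr3R
    by_cases hgk : ∃ g ∈ H, (k - 1) • g ≠ 0
    · -- singles give full cosets
      obtain ⟨w, hwH, hwN⟩ := elt (k - 2) {r1, r2}
        (by intro x hx; rcases Finset.mem_insert.1 hx with rfl | hx
            · exact hr1R
            · exact (Finset.mem_singleton.1 hx) ▸ hr2R)
        (by rw [Finset.card_pair hrne]; omega) (by omega)
      have hsum12 : ({r1, r2} : Finset G).sum id = r1 + r2 := Finset.sum_pair hrne
      refine hgoal r1 r2 (({r1, r2} : Finset G).sum id + w)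
        (by have := full (k-1) {r1} (by simpa using hr1R)
              (by rw [Finset.card_singleton]; omega) hgk
            simpa using this)
        (by have := full (k-1) {r2} (by simpa using hr2R)
              (by rw [Finset.card_singleton]; omega) hgk
            simpa using this)
        hwN hr12 ?_ ?_
      · rw [hsum12]
        intro hmem
        apply hr2H
        have heq : r2 = (r1 + r2 + w - r1) - w := by abel
        rw [heq]; exact H.sub_mem hmem hwH
      · rw [hsum12]
        intro hmem
        apply hr1H
        have heq : r1 = (r1 + r2 + w - r2) - w := by abel
        rw [heq]; exact H.sub_mem hmem hwH
    · -- pairs through r3 give full cosets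
      push_neg at hgk
      have goodk2 : ∃ g ∈ H, (k - 2) • g ≠ 0 := by
        obtain ⟨b, hbH, hbne⟩ := good1
        refine ⟨b, hbH, fun hc => ?_⟩
        have h1 : (k - 1) • b = 0 := hgk b hbH
        have h2 : (k - 1) • b = (k - 2) • b + b := by
          have : k - 1 = (k - 2) + 1 := by omega
          rw [this, succ_nsmul]
        rw [h2, hc, zero_add] at h1
        exact hbne (by rw [one_nsmul]; exact h1)
      obtain ⟨w, hwH, hwN⟩ := elt (k - 1) {r3} (by simpa using hr3R)
        (by rw [Finset.card_singleton]; omega) (by omega)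
      have hs13 : ({r1, r3} : Finset G).sum id = r1 + r3 := Finset.sum_pair (fun h => hr3n.1 h.symm)
      have hs23 : ({r2, r3} : Finset G).sum id = r2 + r3 := Finset.sum_pair (fun h => hr3n.2 h.symm)
      have hsr3 : ({r3} : Finset G).sum id = r3 := Finset.sum_singleton _ _
      refine hgoal (r1 + r3) (r2 + r3) (({r3} : Finset G).sum id + w)
        (by have := full (k-2) {r1, r3}
              (by intro x hx; rcases Finset.mem_insert.1 hx with rfl | hx
                  · exact hr1R
                  · exact (Finset.mem_singleton.1 hx) ▸ hr3R)
              (by rw [Finset.card_pair (fun h => hr3n.1 h.symm)]; omega) goodk2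
            rwa [hs13] at this)
        (by have := full (k-2) {r2, r3}
              (by intro x hx; rcases Finset.mem_insert.1 hx with rfl | hx
                  · exact hr2R
                  · exact (Finset.mem_singleton.1 hx) ▸ hr3R)
              (by rw [Finset.card_pair (fun h => hr3n.2 h.symm)]; omega) goodk2
            rwa [hs23] at this)
        hwN ?_ ?_ ?_
      · intro hmem
        apply hr12
        have heq : r1 - r2 = (r1 + r3) - (r2 + r3) := by abel
        rw [heq]; exact hmem
      · rw [hsr3]
        intro hmem
        apply hr1H
        have heq : r1 = -((r3 + w) - (r1 + r3) - w) := by abel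
        rw [heq]; exact H.neg_mem (H.sub_mem hmem hwH)
      · rw [hsr3]
        intro hmem
        apply hr2H
        have heq : r2 = -((r3 + w) - (r2 + r3) - w) := by abel
        rw [heq]; exact H.neg_mem (H.sub_mem hmem hwH)

end Aux

theorem stmt15 {G : Type*} [AddCommGroup G] [DecidableEq G] (A : Finset G)
    (heven : Even A.card) (hA : 6 ≤ A.card)
    (hcoset : ∃ (H : AddSubgroup G) (g : G),
      Nat.card H = A.card / 2 ∧ (g +ᵥ (H : Set G)) ⊆ (A : Set G))
    (hnotcoset : ¬ ∃ (H : AddSubgroup G) (g : G), (A : Set G) = g +ᵥ (H : Set G)) :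
    ∀ k : ℕ, 3 ≤ k → k ≤ A.card - 3 → A.card < (nSum k A).card := by
  obtain ⟨H, g, hHcard, hgsub⟩ := hcoset
  obtain ⟨r, hr⟩ := heven
  have hmr : Nat.card H = r := by rw [hHcard, hr]; omega
  have hr3 : 3 ≤ r := by omega
  have hfinH : (H : Set G).Finite := by
    have : Finite H := Nat.finite_of_card_ne_zero (by omega)
    exact Set.toFinite _
  set HF := hfinH.toFinset with hHFdef
  have hHF : ∀ x, x ∈ HF ↔ x ∈ H := fun x => by
    rw [hHFdef, Set.Finite.mem_toFinset]; rfl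
  have hHFcard : HF.card = r := by
    have h2 : Nat.card ↥(H : Set G) = HF.card := by
      rw [hHFdef]; exact Nat.card_eq_card_finite_toFinset hfinH
    rw [← hmr]
    exact h2.symm
  set A' := A.image (fun x => -g + x) with hA'def
  have hA'card : A'.card = A.card :=
    Finset.card_image_of_injective _ (add_right_injective (-g))
  have hHFA' : HF ⊆ A' := by
    intro h hh
    have hgh : g + h ∈ (A : Set G) := hgsub ⟨h, (hHF h).1 hh, rfl⟩
    exact Finset.mem_image.2 ⟨g + h, hgh, by abel⟩
  have hAA' : (A : Set G) = g +ᵥ (A' : Set G) := by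
    rw [hA'def, Finset.coe_image]
    ext x
    simp only [Set.mem_vadd_set, Set.mem_image, vadd_eq_add, Finset.mem_coe]
    constructor
    · intro hx
      exact ⟨-g + x, ⟨x, hx, rfl⟩, by abel⟩
    · rintro ⟨y, ⟨a, ha, rfl⟩, rfl⟩
      simpa using ha
  have hnc' : ¬ ∃ (K : AddSubgroup G) (g' : G), (A' : Set G) = g' +ᵥ (K : Set G) := by
    rintro ⟨K, g', hK⟩
    exact hnotcoset ⟨K, g + g', by rw [hAA', hK, vadd_vadd]⟩
  have hmain : ∀ k : ℕ, 3 ≤ k → k ≤ r → A.card < (nSum k A).card := by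
    intro k hk3 hkr
    have := main_lemma hHF hHFA' (by rw [hA'card, hHFcard, hr]; ring)
      (by omega) hnc' k hk3 (by omega)
    rw [hA'card] at this
    rw [hA'def] at this
    rwa [card_nSum_image_add k A (-g)] at this
  intro k hk3 hkub
  rcases le_or_gt k r with hkr | hkr
  · exact hmain k hk3 hkr
  · have hk2r : k ≤ r + r - 3 := by omega
    set k' := r + r - k with hk'def
    have h1 : (nSum k A).card = (nSum k' A).card := by
      have := card_nSum_compl k' A (by omega)
      rw [show A.card - k' = k by omega] at this
      exact this
    rw [h1]
    exact hmain k' (by omega) (by omega)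
end
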